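/- arXiv:2406.14904 — 2 statements merged into one kernel-verified Lean document; each statement's English description precedes it below -/
import Mathlib

section
/- (Validity of Split Conformal Prediction, upper bound.) Let (Ω, P) be a probability space, E a measurable space, n ∈ ℕ, and let (X_1, Y_1), …, (X_{n+1}, Y_{n+1}) be E × ℝ-valued random variables that are exchangeable. Let μ : E → ℝ be a measurable function, α ∈ (0,1), and k = ⌈(1−α)(n+1)⌉, and assume k ≤ n. Define S_i(ω) = |Y_i(ω) − μ(X_i(ω))| for i = 1, …, n+1, and let Q̂(ω) be the k-th order statistic of the multiset {S_1(ω), …, S_n(ω)}. If moreover the scores S_1, …, S_{n+1} are almost surely pairwise distinct, i.e. P({ω : S_i(ω) = S_j(ω) for some i ≠ j}) = 0, then P({ω : μ(X_{n+1}(ω)) − Q̂(ω) ≤ Y_{n+1}(ω) ≤ μ(X_{n+1}(ω)) + Q̂(ω)}) ≤ 1 − α + 1/(n+1). -/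
/-!
Let `R` be the rank of the test score `S_{n+1}` among all `n + 1` scores. If the test point is
covered then `S_{n+1} ≤ Q̂`, so (scores being a.s. distinct) fewer than `k` calibration scores
lie below `S_{n+1}`, i.e. `R ≤ k`. By exchangeability all `n + 1` ranks have the same law, and
a.s. exactly `k` of them are at most `k`; hence `P(R ≤ k) = k / (n + 1) ≤ 1 - α + 1 / (n + 1)`.
-/

open MeasureTheory Finset Function
open scoped ENNReal

section Rank

variable {ι β : Type*} [Fintype ι] [LinearOrder β]

def rank (f : ι → β) (i : ι) : ℕ := #{j | f j ≤ f i}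

lemma rank_lt_rank {f : ι → β} {i j : ι} (h : f i < f j) : rank f i < rank f j := by
  refine card_lt_card <| (ssubset_iff_of_subset fun l hl => ?_).2 ⟨j, by simp, by simpa using h⟩
  simp only [mem_filter, mem_univ, true_and] at hl ⊢
  exact hl.trans h.le

lemma rank_injective {f : ι → β} (hf : Injective f) : Injective (rank f) := by
  intro i j hij
  by_contra hne
  rcases lt_or_gt_of_ne (hf.ne hne) with h | h
  · exact (rank_lt_rank h).ne hij
  · exact (rank_lt_rank h).ne' hij

lemma rank_mem_Icc (f : ι → β) (i : ι) : rank f i ∈ Icc 1 (Fintype.card ι) :=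
  mem_Icc.2 ⟨card_pos.2 ⟨i, by simp⟩, card_le_univ _⟩

lemma image_rank {f : ι → β} (hf : Injective f) :
    univ.image (rank f) = Icc 1 (Fintype.card ι) := by
  refine eq_of_subset_of_card_le (fun _ hm => ?_) ?_
  · obtain ⟨i, -, rfl⟩ := mem_image.1 hm
    exact rank_mem_Icc f i
  · rw [card_image_of_injective _ (rank_injective hf)]
    simp

lemma card_rank_le {f : ι → β} (hf : Injective f) {k : ℕ} (hk : k ≤ Fintype.card ι) :
    #{i | rank f i ≤ k} = k := by
  have hIcc : {m ∈ Icc 1 (Fintype.card ι) | m ≤ k} = Icc 1 k := by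
    ext m
    simp only [mem_filter, mem_Icc]
    omega
  calc #{i | rank f i ≤ k} = #{m ∈ univ.image (rank f) | m ≤ k} := by
        rw [filter_image, card_image_of_injective _ (rank_injective hf)]
    _ = k := by rw [image_rank hf, hIcc, Nat.card_Icc, Nat.add_sub_cancel]

lemma rank_comp_perm (f : ι → β) (σ : Equiv.Perm ι) (i : ι) :
    rank (f ∘ σ) i = rank f (σ i) :=
  card_equiv σ (by simp)

end Rank

section OrderStatistic

variable {β : Type*} [LinearOrder β]

lemma List.length_filter_lt_le_of_pairwise {l : List β} (hl : l.Pairwise (· ≤ ·)) {m : ℕ}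
    (hm : m < l.length) {x : β} (hx : x ≤ l[m]) : (l.filter (· < x)).length ≤ m := by
  have hdrop : ∀ y ∈ l.drop m, ¬ y < x := by
    have hsorted := hl.drop (i := m)
    rw [List.drop_eq_getElem_cons hm, List.pairwise_cons] at hsorted
    rw [List.drop_eq_getElem_cons hm]
    rintro y (_ | ⟨_, hy⟩)
    · exact hx.not_gt
    · exact (hx.trans (hsorted.1 y hy)).not_gt
  calc (l.filter (· < x)).length
      = ((l.take m).filter (· < x)).length + ((l.drop m).filter (· < x)).length := by
        rw [← List.length_append, ← List.filter_append, List.take_append_drop]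
    _ = ((l.take m).filter (· < x)).length := by
        rw [List.filter_eq_nil_iff.2 (by simpa using hdrop : ∀ y ∈ l.drop m, ¬ decide (y < x)),
          List.length_nil, add_zero]
    _ ≤ m := (List.length_filter_le _ _).trans (List.length_take_le _ _)

lemma Multiset.card_filter_lt_le_of_le_sort_getD {s : Multiset β} {m : ℕ} (hm : m < card s)
    {x d : β} (hx : x ≤ (s.sort (· ≤ ·)).getD m d) : card (s.filter (· < x)) ≤ m := by
  have hm' : m < (s.sort (· ≤ ·)).length := by simpa using hm
  rw [List.getD_eq_getElem _ _ hm'] at hx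
  have := List.length_filter_lt_le_of_pairwise (s.pairwise_sort _) hm' hx
  rwa [← s.sort_eq (· ≤ ·), Multiset.filter_coe, Multiset.coe_card]

lemma rank_last_le_of_le_sort_getD {n k : ℕ} (hk : 1 ≤ k) (hkn : k ≤ n)
    {s : Fin (n + 1) → β} (hs : Injective s) {d : β}
    (h : s (Fin.last n) ≤
      ((univ.val.map fun i : Fin n => s i.castSucc).sort (· ≤ ·)).getD (k - 1) d) :
    rank s (Fin.last n) ≤ k := by
  set calib := univ.val.map fun i : Fin n => s i.castSucc
  set q := (calib.sort (· ≤ ·)).getD (k - 1) d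
  have hsplit : rank s (Fin.last n) = #{i : Fin n | s i.castSucc ≤ s (Fin.last n)} + 1 := by
    simp only [rank, card_filter, Fin.sum_univ_castSucc, le_refl, if_true]
  have hle :
      #{i : Fin n | s i.castSucc ≤ s (Fin.last n)} ≤ #{i : Fin n | s i.castSucc < q} := by
    refine card_le_card fun i hi => ?_
    simp only [mem_filter, mem_univ, true_and] at hi ⊢
    exact (hi.lt_of_ne (hs.ne (Fin.castSucc_lt_last i).ne)).trans_le h
  have hq : #{i : Fin n | s i.castSucc < q} ≤ k - 1 := by
    have := Multiset.card_filter_lt_le_of_le_sort_getD (s := calib) (m := k - 1) (d := d)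
      (by simp [calib]; omega) le_rfl
    rwa [Multiset.filter_map, Multiset.card_map] at this
  omega

end OrderStatistic

section Exchangeable

def IsExchangeable {ι α : Type*} [MeasurableSpace α] (ν : Measure (ι → α)) : Prop :=
  ∀ σ : Equiv.Perm ι, ν.map (fun z => z ∘ σ) = ν

lemma IsExchangeable.map_comp {ι α β : Type*} [MeasurableSpace α] [MeasurableSpace β]
    {ν : Measure (ι → α)} (hν : IsExchangeable ν) {g : α → β} (hg : Measurable g) :
    IsExchangeable (ν.map fun z => g ∘ z) := by
  intro σ
  have hgz : Measurable fun z : ι → α => g ∘ z := by fun_prop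
  rw [Measure.map_map (by fun_prop) hgz]
  conv_rhs => rw [← hν σ, Measure.map_map hgz (by fun_prop)]
  rfl

lemma isExchangeable_map {Ω ι α : Type*} [MeasurableSpace Ω] [MeasurableSpace α]
    {P : Measure Ω} {Z : Ω → ι → α} (hZ : Measurable Z)
    (h : ∀ σ : Equiv.Perm ι, P.map (fun ω => Z ω ∘ σ) = P.map Z) :
    IsExchangeable (P.map Z) := fun σ => by
  rw [Measure.map_map (by fun_prop) hZ]
  exact h σ

variable {ι : Type*} [Fintype ι]

lemma measurable_rank (i : ι) : Measurable fun f : ι → ℝ => rank f i := by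
  simp only [rank, card_filter]
  exact Finset.measurable_sum _ fun j _ =>
    Measurable.ite (measurableSet_le (measurable_pi_apply j) (measurable_pi_apply i))
      measurable_const measurable_const

lemma measurableSet_rank_le (i : ι) (k : ℕ) : MeasurableSet {f : ι → ℝ | rank f i ≤ k} :=
  measurableSet_le (measurable_rank i) measurable_const

lemma measurableSet_setOf_injective : MeasurableSet {f : ι → ℝ | Injective f} := by
  simp only [Injective, Set.ofPred_forall]
  exact .iInter fun i => .iInter fun j =>
    (measurableSet_eq_fun (measurable_pi_apply i) (measurable_pi_apply j)).imp (.const _)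

variable {ν : Measure (ι → ℝ)}

lemma IsExchangeable.measure_rank_le_eq (hν : IsExchangeable ν) (i j : ι) (k : ℕ) :
    ν {f | rank f i ≤ k} = ν {f | rank f j ≤ k} := by
  classical
  have hpre : (fun f : ι → ℝ => f ∘ Equiv.swap i j) ⁻¹' {f | rank f j ≤ k} =
      {f | rank f i ≤ k} := by
    ext f
    simp [rank_comp_perm]
  rw [← hpre, ← Measure.map_apply (by fun_prop) (measurableSet_rank_le j k), hν]

lemma IsExchangeable.measure_rank_le_eq_div [IsProbabilityMeasure ν] (hν : IsExchangeable ν)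
    (hinj : ∀ᵐ f ∂ν, Injective f) {k : ℕ} (hk : k ≤ Fintype.card ι) (i : ι) :
    ν {f | rank f i ≤ k} = k / Fintype.card ι := by
  have : Nonempty ι := ⟨i⟩
  rw [ENNReal.eq_div_iff (by simp) (by simp)]
  calc (Fintype.card ι : ℝ≥0∞) * ν {f | rank f i ≤ k}
        = ∑ j, ν {f | rank f j ≤ k} := by
        simp [hν.measure_rank_le_eq _ i]
    _ = ∫⁻ f, ∑ j, {f | rank f j ≤ k}.indicator 1 f ∂ν := by
        rw [lintegral_finsetSum _ fun j _ => measurable_one.indicator (measurableSet_rank_le j k)]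
        exact sum_congr rfl fun j _ => (lintegral_indicator_one (measurableSet_rank_le j k)).symm
    _ = ∫⁻ _, (k : ℝ≥0∞) ∂ν := by
        refine lintegral_congr_ae (hinj.mono fun f hf => ?_)
        simp only [Set.indicator_apply, Set.mem_ofPred_eq, Pi.one_apply]
        rw [← natCast_card_filter, card_rank_le hf hk]
    _ = k := by simp

lemma measure_preimage_rank_le_eq_div {Ω : Type*} [MeasurableSpace Ω] {P : Measure Ω}
    [IsProbabilityMeasure P] {T : Ω → ι → ℝ} (hT : Measurable T)
    (hexch : IsExchangeable (P.map T)) (hdistinct : P {ω | ¬ Injective (T ω)} = 0) {k : ℕ}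
    (hk : k ≤ Fintype.card ι) (i : ι) :
    P (T ⁻¹' {f | rank f i ≤ k}) = k / Fintype.card ι := by
  have : IsProbabilityMeasure (P.map T) := Measure.isProbabilityMeasure_map hT.aemeasurable
  have hinj : ∀ᵐ f ∂(P.map T), Injective f :=
    (ae_map_iff hT.aemeasurable measurableSet_setOf_injective).2
      ((measure_eq_zero_iff_ae_notMem.1 hdistinct).mono fun _ => not_not.1)
  rw [← Measure.map_apply hT (measurableSet_rank_le i k), hexch.measure_rank_le_eq_div hinj hk]

end Exchangeable

lemma natCeil_mul_div_le {p : ℝ} (hp : 0 ≤ p) (n : ℕ) :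
    (⌈p * (n + 1 : ℝ)⌉₊ : ℝ≥0∞) / (n + 1) ≤ ENNReal.ofReal (p + 1 / (n + 1 : ℝ)) := by
  have hceil : (⌈p * (n + 1 : ℝ)⌉₊ : ℝ) ≤ (p + 1 / (n + 1 : ℝ)) * (n + 1) := by
    rw [add_mul, one_div_mul_cancel (by positivity)]
    exact (Nat.ceil_lt_add_one (by positivity)).le
  rw [ENNReal.div_le_iff (by simp) (by simp), ← ENNReal.ofReal_natCast,
    show (n + 1 : ℝ≥0∞) = ENNReal.ofReal (n + 1) by norm_cast,
    ← ENNReal.ofReal_mul (by positivity)]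
  exact ENNReal.ofReal_le_ofReal hceil

/-- Validity of Split Conformal Prediction: upper bound. -/
theorem stmt_3 {Ω E : Type*} [MeasurableSpace Ω] [MeasurableSpace E]
    (P : Measure Ω) [IsProbabilityMeasure P] (n : ℕ)
    (X : Fin (n + 1) → Ω → E) (Y : Fin (n + 1) → Ω → ℝ)
    (hmeas : ∀ i, Measurable (fun ω => (X i ω, Y i ω)))
    (hexch : ∀ σ : Equiv.Perm (Fin (n + 1)),
      Measure.map (fun ω => fun i => (X (σ i) ω, Y (σ i) ω)) P
        = Measure.map (fun ω => fun i => (X i ω, Y i ω)) P)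
    (μ : E → ℝ) (hμ : Measurable μ)
    (α : ℝ) (hα : α ∈ Set.Ioo (0 : ℝ) 1)
    (k : ℕ) (hk : k = ⌈(1 - α) * (n + 1 : ℝ)⌉₊) (hkn : k ≤ n)
    (S : Fin (n + 1) → Ω → ℝ) (hS : ∀ i ω, S i ω = |Y i ω - μ (X i ω)|)
    (hdistinct : P {ω | ∃ i j : Fin (n + 1), i ≠ j ∧ S i ω = S j ω} = 0)
    (Q : Ω → ℝ)
    (hQ : ∀ ω, Q ω =
      ((Finset.univ.val.map (fun i : Fin n => S i.castSucc ω)).sort (· ≤ ·)).getD (k - 1) 0) :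
    P {ω | μ (X (Fin.last n) ω) - Q ω ≤ Y (Fin.last n) ω ∧
           Y (Fin.last n) ω ≤ μ (X (Fin.last n) ω) + Q ω}
      ≤ ENNReal.ofReal (1 - α + 1 / (n + 1 : ℝ)) := by
  have hα1 : 0 ≤ 1 - α := by linarith [hα.2]
  have hk1 : 1 ≤ k := hk ▸ Nat.one_le_ceil_iff.2 (by nlinarith [hα.2])
  set T : Ω → Fin (n + 1) → ℝ := fun ω i => S i ω
  have hZ : Measurable fun ω i => (X i ω, Y i ω) := measurable_pi_lambda _ hmeas
  have hTZ :
      T = (fun z => (fun p : E × ℝ => |p.2 - μ p.1|) ∘ z) ∘ fun ω i => (X i ω, Y i ω) :=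
    funext₂ fun ω i => hS i ω
  have hT : Measurable T := hTZ ▸ (by fun_prop : Measurable _).comp hZ
  have hexchT : IsExchangeable (P.map T) := by
    rw [hTZ, ← Measure.map_map (by fun_prop) hZ]
    exact (isExchangeable_map hZ hexch).map_comp (by fun_prop)
  have hties :
      {ω | ∃ i j : Fin (n + 1), i ≠ j ∧ S i ω = S j ω} = {ω | ¬ Injective (T ω)} := by
    ext ω
    simp only [Set.mem_ofPred_eq, not_injective_iff, T]
    tauto
  rw [hties] at hdistinct
  have hcover : {ω | μ (X (Fin.last n) ω) - Q ω ≤ Y (Fin.last n) ω ∧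
      Y (Fin.last n) ω ≤ μ (X (Fin.last n) ω) + Q ω} ⊆
      T ⁻¹' {f | rank f (Fin.last n) ≤ k} ∪ {ω | ¬ Injective (T ω)} := by
    rintro ω ⟨hlo, hhi⟩
    refine or_iff_not_imp_right.2 fun hω => rank_last_le_of_le_sort_getD (d := 0) hk1 hkn
      (not_not.1 hω) (hQ ω ▸ (hS _ ω).trans_le (abs_sub_le_iff.2 ⟨by linarith, by linarith⟩))
  calc _ ≤ P (T ⁻¹' {f | rank f (Fin.last n) ≤ k}) + P {ω | ¬ Injective (T ω)} :=
        (measure_mono hcover).trans (measure_union_le _ _)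
    _ = k / (n + 1) := by
        rw [hdistinct, add_zero,
          measure_preimage_rank_le_eq_div hT hexchT hdistinct (by simp; omega), Fintype.card_fin,
          Nat.cast_succ]
    _ ≤ _ := hk ▸ natCeil_mul_div_le hα1 n
end

section
/- (Validity of Conformalized Quantile Regression, lower bound.) Let (Ω, P) be a probability space, E a measurable space, n ∈ ℕ, and let (X_1, Y_1), …, (X_{n+1}, Y_{n+1}) be E × ℝ-valued random variables that are exchangeable. Let l, u : E → ℝ be measurable functions, α ∈ (0,1), and k = ⌈(1−α)(n+1)⌉, and assume k ≤ n. Define the conformity scores S_i(ω) = max{Y_i(ω) − u(X_i(ω)), l(X_i(ω)) − Y_i(ω)} for i = 1, …, n, and let Q̂(ω) be the k-th order statistic of the multiset {S_1(ω), …, S_n(ω)}. Then P({ω : l(X_{n+1}(ω)) − Q̂(ω) ≤ Y_{n+1}(ω) ≤ u(X_{n+1}(ω)) + Q̂(ω)}) ≥ 1 − α. -/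
open MeasureTheory Finset
open scoped ENNReal

/-!
Coverage means exactly that fewer than `k` of the `n + 1` scores lie strictly below the test
score `S (Fin.last n)`. Among any `n + 1` reals at least `k` have this property (the `k` smallest,
ties included), so the `n + 1` events "fewer than `k` scores lie strictly below `S j`" cover `Ω`
at least `k` times. By exchangeability they all have the probability of the coverage event,
which is therefore at least `k / (n + 1) ≥ 1 - α`.
-/

theorem List.Pairwise.le_getElem_iff_countP_lt_le {α : Type*} [LinearOrder α] {L : List α}
    (hL : L.Pairwise (· ≤ ·)) {m : ℕ} (hm : m < L.length) (t : α) :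
    t ≤ L[m] ↔ L.countP (· < t) ≤ m := by
  induction L generalizing m with
  | nil => simp at hm
  | cons a L ih =>
    rw [List.pairwise_cons] at hL
    by_cases hat : a < t
    · cases m with
      | zero => simp [hat]
      | succ m => simp [ih hL.2 (by simpa using hm), hat]
    · rw [not_lt] at hat
      have hzero : L.countP (· < t) = 0 := by
        simp only [List.countP_eq_zero, decide_eq_true_eq, not_lt]
        exact fun b hb => hat.trans (hL.1 b hb)
      cases m with
      | zero => simp [hzero, hat, hat.not_gt]
      | succ m => simpa [hzero, hat.not_gt] using hat.trans (hL.1 _ (List.getElem_mem _))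

theorem Multiset.le_sort_getD_iff {α : Type*} [LinearOrder α] (s : Multiset α) {m : ℕ}
    (hm : m < Multiset.card s) (t d : α) :
    t ≤ (s.sort (· ≤ ·)).getD m d ↔ s.countP (· < t) ≤ m := by
  have hlen : m < (s.sort (· ≤ ·)).length := by simpa using hm
  rw [List.getD_eq_getElem _ _ hlen,
    (Multiset.pairwise_sort s _).le_getElem_iff_countP_lt_le hlen t]
  conv_rhs => rw [← Multiset.sort_eq s (· ≤ ·), Multiset.coe_countP]

theorem le_sort_map_univ_getD_iff {ι α : Type*} [Fintype ι] [LinearOrder α] (g : ι → α)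
    {m : ℕ} (hm : m < Fintype.card ι) (t d : α) :
    t ≤ ((univ.val.map g).sort (· ≤ ·)).getD m d ↔ #{i | g i < t} ≤ m := by
  rw [Multiset.le_sort_getD_iff _ (by simpa using hm), Multiset.countP_map]
  rfl

section Rank

variable {ι κ α : Type*} [Fintype ι] [Fintype κ] [LinearOrder α]

def strictRank (f : ι → α) (j : ι) : ℕ := #{i | f i < f j}

theorem strictRank_comp_equiv (f : ι → α) (e : κ ≃ ι) (j : κ) :
    strictRank (f ∘ e) j = strictRank f (e j) := by
  simp only [strictRank, card_filter, Function.comp_apply]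
  exact e.sum_comp (fun i => if f i < f (e j) then 1 else 0)

theorem strictRank_last {n : ℕ} (f : Fin (n + 1) → α) :
    strictRank f (Fin.last n) = #{i : Fin n | f i.castSucc < f (Fin.last n)} := by
  rw [strictRank, card_filter, card_filter, Fin.sum_univ_castSucc]
  simp

theorem Fin.succ_le_card_strictRank_le {n : ℕ} (f : Fin n → α) {m : ℕ} (hm : m < n) :
    m + 1 ≤ #{j | strictRank f j ≤ m} := by
  set σ := Tuple.sort f
  have hsub : (Iic (⟨m, hm⟩ : Fin n)).map σ.toEmbedding ⊆
      ({j | strictRank f j ≤ m} : Finset _) := by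
    intro j hj
    obtain ⟨t, ht, rfl⟩ := mem_map.1 hj
    have hbelow : ({i | f i < f (σ t)} : Finset _) ⊆ (Iio t).map σ.toEmbedding := by
      intro i hi
      refine mem_map.2 ⟨σ.symm i, mem_Iio.2 (not_le.1 fun hti => ?_), by simp⟩
      have hle : f (σ t) ≤ f (σ (σ.symm i)) := Tuple.monotone_sort f hti
      rw [Equiv.apply_symm_apply] at hle
      exact (mem_filter.1 hi).2.not_ge hle
    refine mem_filter.2 ⟨mem_univ _, ?_⟩
    calc #{i | f i < f (σ t)} ≤ #((Iio t).map σ.toEmbedding) := card_le_card hbelow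
      _ = t := by simp
      _ ≤ m := Fin.le_iff_val_le_val.1 (mem_Iic.1 ht)
  simpa using card_le_card hsub

theorem succ_le_card_strictRank_le (f : ι → α) {m : ℕ} (hm : m < Fintype.card ι) :
    m + 1 ≤ #{j | strictRank f j ≤ m} := by
  set e := (Fintype.equivFin ι).symm
  calc m + 1 ≤ #{j | strictRank (f ∘ e) j ≤ m} := Fin.succ_le_card_strictRank_le _ hm
    _ = #{j | strictRank f j ≤ m} := by
      simp only [strictRank_comp_equiv]
      exact card_equiv e (by simp)

end Rank

theorem measurableSet_strictRank_le {ι β : Type*} [Fintype ι] [MeasurableSpace β]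
    {s : β → ℝ} (hs : Measurable s) (j : ι) (m : ℕ) :
    MeasurableSet {v : ι → β | strictRank (fun i => s (v i)) j ≤ m} := by
  simp only [strictRank, card_filter]
  refine measurableSet_le (Finset.measurable_sum _ fun i _ =>
    Measurable.ite ?_ measurable_const measurable_const) measurable_const
  exact measurableSet_lt (hs.comp (measurable_pi_apply i)) (hs.comp (measurable_pi_apply j))

theorem mul_measure_univ_le_sum_measure_of_le_card {ι Ω : Type*} [Fintype ι] [MeasurableSpace Ω]
    (μ : Measure Ω) {A : ι → Set Ω} [∀ ω j, Decidable (ω ∈ A j)]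
    (hA : ∀ j, MeasurableSet (A j)) {k : ℕ}
    (hk : ∀ ω, k ≤ #{j | ω ∈ A j}) :
    k * μ Set.univ ≤ ∑ j, μ (A j) := by
  have hcount : ∀ ω, (#{j | ω ∈ A j} : ℝ≥0∞) = ∑ j, (A j).indicator 1 ω := by
    intro ω
    rw [card_filter]
    push_cast
    simp [Set.indicator_apply]
  calc k * μ Set.univ = ∫⁻ _, (k : ℝ≥0∞) ∂μ := by simp
    _ ≤ ∫⁻ ω, ∑ j, (A j).indicator 1 ω ∂μ :=
      lintegral_mono fun ω => (hcount ω) ▸ Nat.cast_le.2 (hk ω)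
    _ = ∑ j, μ (A j) := by
      rw [lintegral_finsetSum _ fun j _ => measurable_one.indicator (hA j)]
      simp [lintegral_indicator_one (hA _)]

theorem succ_le_card_mul_measure_strictRank_le {Ω ι β : Type*} [MeasurableSpace Ω]
    [MeasurableSpace β] [Fintype ι] (P : Measure Ω) [IsProbabilityMeasure P]
    {Z : Ω → ι → β} (hZ : Measurable Z)
    (hexch : ∀ σ : Equiv.Perm ι, P.map (fun ω i => Z ω (σ i)) = P.map Z)
    {s : β → ℝ} (hs : Measurable s) (j₀ : ι) (m : ℕ) (hm : m < Fintype.card ι) :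
    (m + 1 : ℝ≥0∞) ≤
      Fintype.card ι * P {ω | strictRank (fun i => s (Z ω i)) j₀ ≤ m} := by
  classical
  set A : ι → Set Ω := fun j => {ω | strictRank (fun i => s (Z ω i)) j ≤ m}
  have hA : ∀ j, MeasurableSet (A j) := fun j => hZ (measurableSet_strictRank_le hs j m)
  have hA_eq : ∀ j, P (A j) = P (A j₀) := by
    intro j
    set σ := Equiv.swap j₀ j
    have hσ : Measurable fun ω i => Z ω (σ i) :=
      measurable_pi_lambda _ fun i => (measurable_pi_apply (σ i)).comp hZ
    have hpre :
        A j = (fun ω i => Z ω (σ i)) ⁻¹' {v | strictRank (fun i => s (v i)) j₀ ≤ m} := by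
      ext ω
      change strictRank (fun i => s (Z ω i)) j ≤ m ↔
        strictRank ((fun i => s (Z ω i)) ∘ σ) j₀ ≤ m
      rw [strictRank_comp_equiv, Equiv.swap_apply_left]
    rw [hpre, ← Measure.map_apply hσ (measurableSet_strictRank_le hs j₀ m), hexch,
      Measure.map_apply hZ (measurableSet_strictRank_le hs j₀ m)]
    rfl
  have hmany : ∀ ω, m + 1 ≤ #{j | ω ∈ A j} := fun ω =>
    succ_le_card_strictRank_le (fun i => s (Z ω i)) hm
  calc (m + 1 : ℝ≥0∞) = ((m + 1 : ℕ) : ℝ≥0∞) * P Set.univ := by simp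
    _ ≤ ∑ j, P (A j) := mul_measure_univ_le_sum_measure_of_le_card P hA hmany
    _ = Fintype.card ι * P (A j₀) := by simp [hA_eq]

/-- Validity of Conformalized Quantile Regression: lower bound. -/
theorem stmt_4 {Ω E : Type*} [MeasurableSpace Ω] [MeasurableSpace E]
    (P : Measure Ω) [IsProbabilityMeasure P] (n : ℕ)
    (X : Fin (n + 1) → Ω → E) (Y : Fin (n + 1) → Ω → ℝ)
    (hmeas : ∀ i, Measurable (fun ω => (X i ω, Y i ω)))
    (hexch : ∀ σ : Equiv.Perm (Fin (n + 1)),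
      Measure.map (fun ω => fun i => (X (σ i) ω, Y (σ i) ω)) P
        = Measure.map (fun ω => fun i => (X i ω, Y i ω)) P)
    (l u : E → ℝ) (hl : Measurable l) (hu : Measurable u)
    (α : ℝ) (hα : α ∈ Set.Ioo (0 : ℝ) 1)
    (k : ℕ) (hk : k = ⌈(1 - α) * (n + 1 : ℝ)⌉₊) (hkn : k ≤ n)
    (S : Fin (n + 1) → Ω → ℝ) (hS : ∀ i ω, S i ω = max (Y i ω - u (X i ω)) (l (X i ω) - Y i ω))
    (Q : Ω → ℝ)
    (hQ : ∀ ω, Q ω =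
      ((Finset.univ.val.map (fun i : Fin n => S i.castSucc ω)).sort (· ≤ ·)).getD (k - 1) 0) :
    P {ω | l (X (Fin.last n) ω) - Q ω ≤ Y (Fin.last n) ω ∧
           Y (Fin.last n) ω ≤ u (X (Fin.last n) ω) + Q ω}
      ≥ ENNReal.ofReal (1 - α) := by
  have hk_pos : 0 < k := hk ▸ Nat.ceil_pos.2 (mul_pos (by linarith [hα.2]) (by positivity))
  obtain ⟨m, rfl⟩ := Nat.exists_eq_add_one_of_ne_zero hk_pos.ne'
  rw [Nat.add_sub_cancel] at hQ
  set score : E × ℝ → ℝ := fun p => max (p.2 - u p.1) (l p.1 - p.2)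
  have hscore : Measurable score := (measurable_snd.sub (hu.comp measurable_fst)).max
    ((hl.comp measurable_fst).sub measurable_snd)
  have hcoverage_eq : {ω | l (X (Fin.last n) ω) - Q ω ≤ Y (Fin.last n) ω ∧
      Y (Fin.last n) ω ≤ u (X (Fin.last n) ω) + Q ω}
      = {ω | strictRank (fun i => score (X i ω, Y i ω)) (Fin.last n) ≤ m} := by
    ext ω
    have hSω : (fun i => score (X i ω, Y i ω)) = fun i => S i ω :=
      funext fun i => (hS i ω).symm
    rw [Set.mem_ofPred_eq, Set.mem_ofPred_eq, hSω, strictRank_last,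
      ← le_sort_map_univ_getD_iff _ (by simp; omega) _ 0, ← hQ, hS, max_le_iff]
    constructor <;> rintro ⟨h1, h2⟩ <;> constructor <;> linarith
  have hrank := succ_le_card_mul_measure_strictRank_le P (measurable_pi_lambda _ hmeas) hexch
    hscore (Fin.last n) m (by simp; omega)
  rw [hcoverage_eq, ge_iff_le, ENNReal.ofReal_le_iff_le_toReal (measure_ne_top _ _)]
  have hreal := ENNReal.toReal_mono (by finiteness) hrank
  rw [← Nat.cast_add_one, ENNReal.toReal_mul, ENNReal.toReal_natCast, ENNReal.toReal_natCast,
    Fintype.card_fin] at hreal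
  push_cast at hreal
  have hceil : (1 - α) * (n + 1) ≤ m + 1 := by exact_mod_cast hk ▸ Nat.le_ceil _
  nlinarith
end
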